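/- arXiv:1902.10523 — 3 statements merged into one kernel-verified Lean document; each statement's English description precedes it below -/
import Mathlib

section
/- Let V ∈ ℝ^{2n×2k} have orthonormal columns and be symplectic. Writing V = [E F] with E, F ∈ ℝ^{2n×k}, it holds that F = J_{2n}^T E, i.e. V = [E J_{2n}^T E] with E^T E = I_k and E^T J_{2n} E = 0. -/
open Matrix

/-- The Poisson matrix `J_{2n} = [[0, I_n], [-I_n, 0]]`. -/
def PoissonMatrix (n : ℕ) : Matrix (Fin n ⊕ Fin n) (Fin n ⊕ Fin n) ℝ :=
  Matrix.fromBlocks 0 1 (-1) 0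

/-- A symplectic matrix `V = [E F]` with orthonormal columns satisfies
`F = J_{2n}ᵀ E`, `Eᵀ E = I` and `Eᵀ J_{2n} E = 0`. -/
theorem orthosymplectic_structure (n k : ℕ)
    (E F : Matrix (Fin n ⊕ Fin n) (Fin k) ℝ)
    (horth : (Matrix.fromCols E F)ᵀ * Matrix.fromCols E F = 1)
    (hsympl : (Matrix.fromCols E F)ᵀ * PoissonMatrix n * Matrix.fromCols E F =
      PoissonMatrix k) :
    F = (PoissonMatrix n)ᵀ * E ∧ Eᵀ * E = 1 ∧ Eᵀ * PoissonMatrix n * E = 0 := by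
  set J := PoissonMatrix n with hJ
  have hJJ : J * Jᵀ = 1 := by
    rw [hJ, PoissonMatrix, Matrix.fromBlocks_transpose, Matrix.fromBlocks_multiply,
      ← Matrix.fromBlocks_one]
    simp
  rw [Matrix.transpose_fromCols, Matrix.fromRows_mul_fromCols, ← Matrix.fromBlocks_one] at horth
  rw [Matrix.transpose_fromCols, Matrix.fromRows_mul, Matrix.fromRows_mul_fromCols,
    PoissonMatrix] at hsympl
  rw [Matrix.fromBlocks_inj] at horth hsympl
  obtain ⟨hEE, hEF, hFE, hFF⟩ := horth
  obtain ⟨hEJE, hEJF, hFJE, hFJF⟩ := hsympl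
  have hJT : Jᵀ = -J := by
    rw [hJ, PoissonMatrix, Matrix.fromBlocks_transpose]
    ext (i|i) (j|j) <;> simp
  have key : (F - Jᵀ * E)ᴴ * (F - Jᵀ * E) = 0 := by
    have hconj : (F - Jᵀ * E)ᴴ = (F - Jᵀ * E)ᵀ := by
      ext i j
      simp [Matrix.conjTranspose_apply]
    rw [hconj]
    have hFJE' : Fᵀ * (Jᵀ * E) = 1 := by
      rw [hJT, Matrix.neg_mul, Matrix.mul_neg, ← Matrix.mul_assoc, hFJE, neg_neg]
    have hEJF' : (Jᵀ * E)ᵀ * F = 1 := by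
      rw [Matrix.transpose_mul, Matrix.transpose_transpose, hEJF]
    have hJE : (Jᵀ * E)ᵀ * (Jᵀ * E) = 1 := by
      rw [Matrix.transpose_mul, Matrix.transpose_transpose, Matrix.mul_assoc,
        ← Matrix.mul_assoc J Jᵀ E, hJJ, Matrix.one_mul, hEE]
    rw [Matrix.transpose_sub, Matrix.sub_mul, Matrix.mul_sub, Matrix.mul_sub,
      hFF, hFJE', hEJF', hJE]
    abel
  have hF : F = Jᵀ * E := sub_eq_zero.mp (Matrix.conjTranspose_mul_self_eq_zero.mp key)
  exact ⟨hF, hEE, hEJE⟩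
end

section
/- For any X ∈ ℝ^{2n×m} and Y = [X J_{2n} X], if u is an eigenvector of Y Y^T with eigenvalue σ, then J_{2n}^T u is also an eigenvector of Y Y^T with the same eigenvalue σ. -/
open Matrix

/-!
`J` is skew-symmetric with `J² = -1`, so `Jᵀ = J⁻¹ = -J`. Hence `Jᵀ` commutes with
`Y Yᵀ = X Xᵀ + J X Xᵀ Jᵀ`: conjugating by `J` swaps the two summands. A matrix commuting
with `Y Yᵀ` maps its eigenvectors to eigenvectors of the same eigenvalue, and `Jᵀ` is
injective, so `Jᵀ u ≠ 0`.
-/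

namespace Matrix

variable {ι R : Type*} [CommRing R]

theorem fromCols_mul_transpose_fromCols {κ₁ κ₂ : Type*} [Fintype κ₁] [Fintype κ₂]
    (A : Matrix ι κ₁ R) (B : Matrix ι κ₂ R) :
    fromCols A B * (fromCols A B)ᵀ = A * Aᵀ + B * Bᵀ := by
  rw [transpose_fromCols, fromCols_mul_fromRows]

variable [Fintype ι]

theorem commute_transpose_add_conj [DecidableEq ι] {J : Matrix ι ι R} (hskew : Jᵀ = -J)
    (hsq : J * J = -1) (A : Matrix ι ι R) : Commute Jᵀ (A + J * A * Jᵀ) := by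
  have hJJ (B : Matrix ι ι R) : J * (J * B) = -B := by rw [← Matrix.mul_assoc, hsq, neg_one_mul]
  rw [hskew, Commute, SemiconjBy]
  simp only [mul_add, add_mul, mul_neg, neg_mul, neg_neg, Matrix.mul_assoc, hsq, hJJ, mul_one]
  abel

theorem mulVec_eq_smul_of_commute {M C : Matrix ι ι R} (hc : Commute C M) {u : ι → R} {σ : R}
    (h : M *ᵥ u = σ • u) : M *ᵥ (C *ᵥ u) = σ • (C *ᵥ u) := by
  rw [mulVec_mulVec, ← hc.eq, ← mulVec_mulVec, h, mulVec_smul]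

end Matrix

theorem PoissonMatrix_transpose (n : ℕ) : (PoissonMatrix n)ᵀ = -PoissonMatrix n := by
  simp [PoissonMatrix, fromBlocks_transpose, fromBlocks_neg]

theorem PoissonMatrix_mul_self (n : ℕ) : PoissonMatrix n * PoissonMatrix n = -1 := by
  simp [PoissonMatrix, fromBlocks_multiply, ← fromBlocks_one, fromBlocks_neg]

theorem PoissonMatrix_mul_transpose (n : ℕ) : PoissonMatrix n * (PoissonMatrix n)ᵀ = 1 := by
  rw [PoissonMatrix_transpose, mul_neg, PoissonMatrix_mul_self, neg_neg]

theorem PoissonMatrix_transpose_mulVec_ne_zero (n : ℕ) {u : Fin n ⊕ Fin n → ℝ} (hu : u ≠ 0) :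
    (PoissonMatrix n)ᵀ *ᵥ u ≠ 0 := by
  intro h
  apply hu
  rw [← one_mulVec u, ← PoissonMatrix_mul_transpose, ← mulVec_mulVec, h, mulVec_zero]

theorem commute_PoissonMatrix_transpose_gram (n : ℕ) {m : Type*} [Fintype m]
    (X : Matrix (Fin n ⊕ Fin n) m ℝ) :
    Commute (PoissonMatrix n)ᵀ
      (fromCols X (PoissonMatrix n * X) * (fromCols X (PoissonMatrix n * X))ᵀ) := by
  have key := commute_transpose_add_conj (PoissonMatrix_transpose n) (PoissonMatrix_mul_self n)
    (X * Xᵀ)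
  rw [fromCols_mul_transpose_fromCols, transpose_mul]
  simpa only [Matrix.mul_assoc] using key

/-- If `u` is an eigenvector of `Y Yᵀ` (for `Y = [X  J_{2n} X]`) with eigenvalue `σ`,
then so is `J_{2n}ᵀ u`, with the same eigenvalue. -/
theorem rotated_eigenvector (n m : ℕ)
    (X : Matrix (Fin n ⊕ Fin n) (Fin m) ℝ)
    (u : (Fin n ⊕ Fin n) → ℝ) (σ : ℝ) (hu : u ≠ 0)
    (heig : (Matrix.fromCols X (PoissonMatrix n * X) *
        (Matrix.fromCols X (PoissonMatrix n * X))ᵀ) *ᵥ u = σ • u) :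
    (Matrix.fromCols X (PoissonMatrix n * X) *
        (Matrix.fromCols X (PoissonMatrix n * X))ᵀ) *ᵥ ((PoissonMatrix n)ᵀ *ᵥ u) =
      σ • ((PoissonMatrix n)ᵀ *ᵥ u) ∧ (PoissonMatrix n)ᵀ *ᵥ u ≠ 0 :=
  ⟨mulVec_eq_smul_of_commute (commute_PoissonMatrix_transpose_gram n X) heig,
    PoissonMatrix_transpose_mulVec_ne_zero n hu⟩
end

section
/- Let X ∈ ℝ^{2n×m} have SVD-like decomposition X = S D Q, and let V be formed by selecting columns s_{i} and s_{n+i} of S for i in an index set I ⊂ {1,…,p+q} of size k. Then the symplectic projection error satisfies ‖(I_{2n} − V V^+) X‖_F² = Σ_{i ∉ I} (wˢ_i)², where wˢ_i = σˢ_i √(‖s_i‖² + ‖s_{n+i}‖²) for 1≤i≤p and wˢ_i = ‖s_i‖ for p+1≤i≤p+q. -/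
open Matrix

attribute [local instance] Matrix.frobeniusNormedAddCommGroup

/-- The sparse middle factor `D` of the SVD-like decomposition (Xu 2003). -/
def SVDlikeD (n m p q : ℕ) (σ : Fin p → ℝ) : Matrix (Fin n ⊕ Fin n) (Fin m) ℝ :=
  Matrix.of fun i j =>
    match i with
    | Sum.inl i =>
        if h : (i : ℕ) < p then (if (j : ℕ) = (i : ℕ) then σ ⟨i, h⟩ else 0)
        else if (j : ℕ) = (i : ℕ) ∧ (i : ℕ) < p + q then 1 else 0
    | Sum.inr i =>
        if h : (i : ℕ) < p then (if (j : ℕ) = p + q + (i : ℕ) then σ ⟨i, h⟩ else 0)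
        else 0

/-- The ROB `V = [s_{i₁}, …, s_{i_k}, s_{n+i₁}, …, s_{n+i_k}]` collecting the pairs of
columns of `S` selected by `f`. -/
def selCols (n p q k : ℕ) (hpq : p + q ≤ n)
    (S : Matrix (Fin n ⊕ Fin n) (Fin n ⊕ Fin n) ℝ) (f : Fin k → Fin (p + q)) :
    Matrix (Fin n ⊕ Fin n) (Fin k ⊕ Fin k) ℝ :=
  Matrix.of fun r c =>
    match c with
    | Sum.inl a => S r (Sum.inl (Fin.castLE hpq (f a)))
    | Sum.inr a => S r (Sum.inr (Fin.castLE hpq (f a)))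

/-- The weighted symplectic singular values
`wˢ_i = σˢ_i √(‖s_i‖² + ‖s_{n+i}‖²)` for `i ≤ p` and `wˢ_i = ‖s_i‖` for `p < i ≤ p+q`. -/
noncomputable def weightedSympSV (n p q : ℕ) (hpq : p + q ≤ n) (σ : Fin p → ℝ)
    (S : Matrix (Fin n ⊕ Fin n) (Fin n ⊕ Fin n) ℝ) : Fin (p + q) → ℝ := fun i =>
  if h : (i : ℕ) < p then
    σ ⟨i, h⟩ * Real.sqrt ((∑ r, (S r (Sum.inl (Fin.castLE hpq i))) ^ 2) +
      ∑ r, (S r (Sum.inr (Fin.castLE hpq i))) ^ 2)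
  else Real.sqrt (∑ r, (S r (Sum.inl (Fin.castLE hpq i))) ^ 2)

lemma frob_sq {ι κ : Type*} [Fintype ι] [Fintype κ] (A : Matrix ι κ ℝ) :
    ‖A‖ ^ 2 = ∑ i, ∑ j, (A i j) ^ 2 := by
  rw [Matrix.frobenius_norm_def]
  rw [← Real.rpow_natCast _ 2, ← Real.rpow_mul (by positivity)]
  norm_num

lemma sum_sq_eq_trace {ι κ : Type*} [Fintype ι] [Fintype κ] [DecidableEq κ] (A : Matrix ι κ ℝ) :
    ∑ i, ∑ j, (A i j) ^ 2 = Matrix.trace (Aᵀ * A) := by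
  rw [Matrix.trace, Finset.sum_comm]
  simp [Matrix.diag, Matrix.mul_apply, sq]

lemma frob_sq_mul_orth {ι κ : Type*} [Fintype ι] [Fintype κ] [DecidableEq κ]
    (A : Matrix ι κ ℝ) (Q : Matrix κ κ ℝ) (hQ' : Q * Qᵀ = 1) :
    ∑ i, ∑ j, ((A * Q) i j) ^ 2 = ∑ i, ∑ j, (A i j) ^ 2 := by
  rw [sum_sq_eq_trace, sum_sq_eq_trace, Matrix.transpose_mul,
    Matrix.mul_assoc, Matrix.trace_mul_comm, Matrix.mul_assoc, Matrix.mul_assoc, hQ',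
    Matrix.mul_one]

lemma sum_ite_eq_inj {α β : Type*} [Fintype α] [DecidableEq β] (g : α → β)
    (hg : Function.Injective g) (y : β) (v : β → ℝ) :
    ∑ a, (if y = g a then v (g a) else 0) = if ∃ a, g a = y then v y else 0 := by
  by_cases h : ∃ a, g a = y
  · obtain ⟨a0, ha⟩ := h
    rw [Finset.sum_eq_single a0, if_pos ha.symm, ha, if_pos ⟨a0, ha⟩]
    · intro b _ hb
      rw [if_neg]
      intro hyb
      exact hb (hg (by rw [← hyb, ha]))
    · simp
  · rw [if_neg h]
    apply Finset.sum_eq_zero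
    intro a _
    rw [if_neg]
    intro hya
    exact h ⟨a, hya.symm⟩

lemma sum_ite_prod (m a b : ℕ) (x y : ℝ) :
    ∑ c : Fin m, (if (c : ℕ) = a then x else 0) * (if (c : ℕ) = b then y else 0) =
      if a = b ∧ a < m then x * y else 0 := by
  by_cases hab : a = b ∧ a < m
  · obtain ⟨rfl, h⟩ := hab
    rw [if_pos ⟨rfl, h⟩, Finset.sum_eq_single (⟨a, h⟩ : Fin m)]
    · simp
    · intro c _ hc
      have : (c : ℕ) ≠ a := fun hca => hc (Fin.ext hca)
      simp [this]
    · simp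
  · rw [if_neg hab]
    apply Finset.sum_eq_zero
    intro c _
    by_cases h1 : (c : ℕ) = a
    · by_cases h2 : (c : ℕ) = b
      · exact absurd ⟨h1 ▸ h2, h1 ▸ c.isLt⟩ hab
      · simp [h2]
    · simp [h1]

lemma sum_fin_restrict {l n : ℕ} (h : l ≤ n) (F : Fin n → ℝ)
    (hF : ∀ x : Fin n, l ≤ (x : ℕ) → F x = 0) :
    ∑ x : Fin n, F x = ∑ i : Fin l, F (Fin.castLE h i) := by
  have hmap : ∑ i : Fin l, F (Fin.castLE h i) = ∑ x ∈ Finset.univ.map (Fin.castLEEmb h), F x := by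
    rw [Finset.sum_map]; rfl
  rw [hmap]
  refine (Finset.sum_subset (Finset.subset_univ _) (fun x _ hx => hF x ?_)).symm
  by_contra hlt
  push_neg at hlt
  exact hx (Finset.mem_map.2 ⟨⟨(x : ℕ), hlt⟩, Finset.mem_univ _, Fin.ext rfl⟩)

noncomputable def dvec (n p q : ℕ) (σ : Fin p → ℝ) : Fin n ⊕ Fin n → ℝ := fun j =>
  match j with
  | Sum.inl i => if h : (i : ℕ) < p then σ ⟨i, h⟩ ^ 2 else if (i : ℕ) < p + q then 1 else 0
  | Sum.inr i => if h : (i : ℕ) < p then σ ⟨i, h⟩ ^ 2 else 0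

lemma DDT (n m p q : ℕ) (hm : 2 * p + q ≤ m) (σ : Fin p → ℝ) :
    SVDlikeD n m p q σ * (SVDlikeD n m p q σ)ᵀ = Matrix.diagonal (dvec n p q σ) := by
  ext j j'
  rw [Matrix.mul_apply]
  rcases j with i | i <;> rcases j' with i' | i' <;>
    simp only [Matrix.transpose_apply, SVDlikeD, Matrix.of_apply, Matrix.diagonal_apply, dvec,
      Sum.inl.injEq, Sum.inr.injEq, reduceCtorEq, if_false] <;>
    by_cases hi : (i : ℕ) < p <;> by_cases hi' : (i' : ℕ) < p <;>
    simp only [hi, hi', dif_pos, dif_neg, not_false_iff]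
  · by_cases h : i = i'
    · subst h
      rw [sum_ite_prod, if_pos ⟨rfl, by omega⟩, if_pos rfl, sq]
    · have hv : (i : ℕ) ≠ (i' : ℕ) := fun hv => h (Fin.ext hv)
      rw [sum_ite_prod, if_neg (by tauto), if_neg h]
  · rw [if_neg (show i ≠ i' from fun h => hi' (h ▸ hi))]
    apply Finset.sum_eq_zero
    intro c _
    by_cases h1 : (c : ℕ) = (i : ℕ)
    · rw [if_pos h1, if_neg (by omega), mul_zero]
    · rw [if_neg h1, zero_mul]
  · rw [if_neg (show i ≠ i' from fun h => hi (h ▸ hi'))]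
    apply Finset.sum_eq_zero
    intro c _
    by_cases h1 : (c : ℕ) = (i' : ℕ)
    · rw [if_pos h1, if_neg (by omega), zero_mul]
    · rw [if_neg h1, mul_zero]
  · by_cases h : i = i'
    · subst h
      by_cases hq : (i : ℕ) < p + q
      · simp only [hq, and_true]
        rw [sum_ite_prod, if_pos ⟨rfl, by omega⟩]
        simp [hq]
      · simp [hq]
    · rw [if_neg h]
      have hv : (i : ℕ) ≠ (i' : ℕ) := fun hv => h (Fin.ext hv)
      apply Finset.sum_eq_zero
      intro c _
      by_cases h1 : (c : ℕ) = (i : ℕ) ∧ (i : ℕ) < p + q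
      · rw [if_pos h1, if_neg (by omega), mul_zero]
      · rw [if_neg h1, zero_mul]
  · rw [sum_ite_prod, if_neg (by omega)]
  · simp
  · apply Finset.sum_eq_zero
    intro c _
    by_cases h1 : (c : ℕ) = (i : ℕ) ∧ (i : ℕ) < p + q
    · rw [if_pos h1, if_neg (by omega), mul_zero]
    · rw [if_neg h1, zero_mul]
  · simp
  · rw [sum_ite_prod, if_neg (by omega)]
  · apply Finset.sum_eq_zero
    intro c _
    by_cases h1 : (c : ℕ) = p + q + (i : ℕ)
    · rw [if_pos h1, if_neg (by omega), mul_zero]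
    · rw [if_neg h1, zero_mul]
  · simp
  · simp
  · by_cases h : i = i'
    · subst h
      rw [sum_ite_prod, if_pos ⟨rfl, by omega⟩, if_pos rfl, sq]
    · have hv : (i : ℕ) ≠ (i' : ℕ) := fun hv => h (Fin.ext hv)
      rw [sum_ite_prod, if_neg (by omega), if_neg h]
  · rw [if_neg (show i ≠ i' from fun h => hi' (h ▸ hi))]
    simp
  · simp
  · simp

lemma proj_cols (n p q k : ℕ) (hpq : p + q ≤ n)
    (S : Matrix (Fin n ⊕ Fin n) (Fin n ⊕ Fin n) ℝ)
    (hS : Sᵀ * PoissonMatrix n * S = PoissonMatrix n)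
    (f : Fin k → Fin (p + q)) (hf : Function.Injective f) :
    selCols n p q k hpq S f *
        ((PoissonMatrix k)ᵀ * (selCols n p q k hpq S f)ᵀ * PoissonMatrix n) * S =
      Matrix.of fun r j =>
        if ∃ a, Fin.castLE hpq (f a) = Sum.elim id id j then S r j else 0 := by
  set V := selCols n p q k hpq S f with hV
  set g : Fin k ⊕ Fin k → Fin n ⊕ Fin n :=
    Sum.map (fun a => Fin.castLE hpq (f a)) (fun a => Fin.castLE hpq (f a)) with hg
  have hginj : Function.Injective g := by
    have hcf : Function.Injective (fun a => Fin.castLE hpq (f a)) := fun a b hab =>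
      hf (Fin.ext (by simpa using congrArg Fin.val hab))
    exact Sum.map_injective.2 ⟨hcf, hcf⟩
  have hVg : ∀ r c, V r c = S r (g c) := by
    intro r c
    cases c <;> rfl
  have hS' : Sᵀ * (PoissonMatrix n * S) = PoissonMatrix n := by
    rw [← Matrix.mul_assoc, hS]
  have h1 : Vᵀ * (PoissonMatrix n * S) = Matrix.of fun c j => PoissonMatrix n (g c) j := by
    ext c j
    have h0 := congrFun (congrFun hS' (g c)) j
    simp only [Matrix.mul_apply, Matrix.transpose_apply, Matrix.of_apply] at h0 ⊢
    rw [← h0]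
    exact Finset.sum_congr rfl fun r _ => by rw [hVg]
  have h2 : (PoissonMatrix k)ᵀ * (Vᵀ * (PoissonMatrix n * S)) =
      Matrix.of fun c j => if j = g c then (1 : ℝ) else 0 := by
    rw [h1]
    ext c j
    rw [Matrix.mul_apply, Fintype.sum_sum_type]
    rcases c with a | a <;> rcases j with y | y <;>
      simp [PoissonMatrix, g, Matrix.one_apply, Finset.sum_ite_eq, Finset.sum_ite_eq',
        eq_comm] <;>
      (rw [Finset.sum_eq_single a ?_ ?_]
       · split_ifs <;> simp_all
       · intro b _ hb
         simp [show a ≠ b from fun h => hb h.symm]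
       · simp)
  have h3 : V * Matrix.of (fun c j => if j = g c then (1 : ℝ) else 0) =
      Matrix.of fun r j =>
        if ∃ a, Fin.castLE hpq (f a) = Sum.elim id id j then S r j else 0 := by
    ext r j
    rw [Matrix.mul_apply]
    have hterm : ∀ c, V r c * (if j = g c then (1 : ℝ) else 0) =
        if j = g c then S r (g c) else 0 := by
      intro c
      by_cases h : j = g c <;> simp [h, hVg]
    simp_rw [Matrix.of_apply, hterm]
    rw [sum_ite_eq_inj g hginj j (fun x => S r x)]
    congr 1
    rcases j with y | y <;> simp [g, Sum.map]
  calc V * ((PoissonMatrix k)ᵀ * Vᵀ * PoissonMatrix n) * S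
      = V * ((PoissonMatrix k)ᵀ * (Vᵀ * (PoissonMatrix n * S))) := by
        simp only [Matrix.mul_assoc]
    _ = _ := by rw [h2, h3]

/-- The symplectic projection error of the PSD SVD-like ROB equals the sum of the
squared neglected weighted symplectic singular values. -/
theorem psd_svd_like_projection_error
    (n m p q k : ℕ) (hpq : p + q ≤ n) (hm : 2 * p + q ≤ m)
    (σ : Fin p → ℝ) (hσ : ∀ i, 0 < σ i)
    (S : Matrix (Fin n ⊕ Fin n) (Fin n ⊕ Fin n) ℝ)
    (hS : Sᵀ * PoissonMatrix n * S = PoissonMatrix n)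
    (Q : Matrix (Fin m) (Fin m) ℝ) (hQ : Qᵀ * Q = 1) (hQ' : Q * Qᵀ = 1)
    (X : Matrix (Fin n ⊕ Fin n) (Fin m) ℝ)
    (hX : X = S * SVDlikeD n m p q σ * Q)
    (f : Fin k → Fin (p + q)) (hf : Function.Injective f) :
    let V := selCols n p q k hpq S f
    ‖((1 : Matrix (Fin n ⊕ Fin n) (Fin n ⊕ Fin n) ℝ) -
        V * ((PoissonMatrix k)ᵀ * Vᵀ * PoissonMatrix n)) * X‖ ^ 2 =
      ∑ i ∈ Finset.univ \ Finset.image f Finset.univ,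
        (weightedSympSV n p q hpq σ S i) ^ 2 := by
  intro V
  classical
  set D := SVDlikeD n m p q σ with hD
  set S₀ : Matrix (Fin n ⊕ Fin n) (Fin n ⊕ Fin n) ℝ :=
    Matrix.of (fun r j =>
      if ∃ a, Fin.castLE hpq (f a) = Sum.elim id id j then 0 else S r j) with hS₀
  have key : ((1 : Matrix (Fin n ⊕ Fin n) (Fin n ⊕ Fin n) ℝ) -
      V * ((PoissonMatrix k)ᵀ * Vᵀ * PoissonMatrix n)) * X = S₀ * D * Q := by
    rw [hX, Matrix.sub_mul, Matrix.one_mul]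
    have ha : V * ((PoissonMatrix k)ᵀ * Vᵀ * PoissonMatrix n) * (S * D * Q)
        = (V * ((PoissonMatrix k)ᵀ * Vᵀ * PoissonMatrix n) * S) * D * Q := by
      simp only [Matrix.mul_assoc]
    rw [ha, proj_cols n p q k hpq S hS f hf, ← Matrix.sub_mul, ← Matrix.sub_mul]
    congr 2
    ext r j
    by_cases h : ∃ a, Fin.castLE hpq (f a) = Sum.elim id id j <;>
      simp [hS₀, h]
  rw [key, frob_sq, frob_sq_mul_orth _ Q hQ', sum_sq_eq_trace]
  have htr : (S₀ * D)ᵀ * (S₀ * D) = Dᵀ * ((S₀ᵀ * S₀) * D) := by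
    rw [Matrix.transpose_mul]
    simp only [Matrix.mul_assoc]
  rw [htr, Matrix.trace_mul_comm, Matrix.mul_assoc, hD, DDT n m p q hm σ, Matrix.trace]
  have hdiag : ∀ j : Fin n ⊕ Fin n,
      ((S₀ᵀ * S₀) * Matrix.diagonal (dvec n p q σ)).diag j =
      (if ∃ a, Fin.castLE hpq (f a) = Sum.elim id id j then 0
        else ∑ r, (S r j) ^ 2) * dvec n p q σ j := by
    intro j
    rw [Matrix.diag_apply, Matrix.mul_diagonal]
    congr 1
    rw [Matrix.mul_apply]
    by_cases h : ∃ a, Fin.castLE hpq (f a) = Sum.elim id id j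
    · simp [hS₀, h]
    · simp [hS₀, h, sq]
  rw [Finset.sum_congr rfl fun j _ => hdiag j, Fintype.sum_sum_type]
  have hp : p ≤ n := by omega
  have hppq : p ≤ p + q := by omega
  -- restrict the inl-sum to Fin (p+q)
  have hLrest := sum_fin_restrict hpq
    (fun x : Fin n =>
      (if ∃ a, Fin.castLE hpq (f a) = Sum.elim id id (Sum.inl x) then 0
        else ∑ r, (S r (Sum.inl x)) ^ 2) * dvec n p q σ (Sum.inl x))
    (fun x hx => by
      have h1 : ¬ (x : ℕ) < p := by omega
      have h2 : ¬ (x : ℕ) < p + q := by omega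
      simp [dvec, h1, h2])
  have hRrest := sum_fin_restrict hp
    (fun x : Fin n =>
      (if ∃ a, Fin.castLE hpq (f a) = Sum.elim id id (Sum.inr x) then 0
        else ∑ r, (S r (Sum.inr x)) ^ 2) * dvec n p q σ (Sum.inr x))
    (fun x hx => by
      have h1 : ¬ (x : ℕ) < p := by omega
      simp [dvec, h1])
  rw [hLrest, hRrest]
  -- pull the Fin p sum up to Fin (p+q)
  have hRrest2 := sum_fin_restrict hppq
    (fun i : Fin (p + q) =>
      if h : (i : ℕ) < p then
        (if ∃ a, Fin.castLE hpq (f a) = Fin.castLE hpq i then 0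
          else ∑ r, (S r (Sum.inr (Fin.castLE hpq i))) ^ 2) * σ ⟨i, h⟩ ^ 2
      else 0)
    (fun i hi => by simp [show ¬ (i : ℕ) < p by omega])
  have hReq : ∑ j : Fin p,
      (if ∃ a, Fin.castLE hpq (f a) = Sum.elim id id (Sum.inr (Fin.castLE hp j)) then 0
        else ∑ r, (S r (Sum.inr (Fin.castLE hp j))) ^ 2) * dvec n p q σ (Sum.inr (Fin.castLE hp j))
      = ∑ j : Fin p,
      (if h : ((Fin.castLE hppq j : Fin (p + q)) : ℕ) < p then
        (if ∃ a, Fin.castLE hpq (f a) = Fin.castLE hpq (Fin.castLE hppq j) then 0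
          else ∑ r, (S r (Sum.inr (Fin.castLE hpq (Fin.castLE hppq j)))) ^ 2) *
            σ ⟨(Fin.castLE hppq j : ℕ), h⟩ ^ 2
      else 0) := by
    apply Finset.sum_congr rfl
    intro j _
    have hj : ((Fin.castLE hppq j : Fin (p + q)) : ℕ) < p := j.isLt
    rw [dif_pos hj]
    have hc : Fin.castLE hpq (Fin.castLE hppq j) = Fin.castLE hp j := Fin.ext rfl
    rw [hc]
    have hσj : σ ⟨((Fin.castLE hppq j : Fin (p + q)) : ℕ), hj⟩ = σ j := by
      congr 1
    rw [hσj]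
    congr 1
    simp [dvec, j.isLt, Fin.eta]
  rw [hReq, ← hRrest2, ← Finset.sum_add_distrib]
  -- now handle the RHS
  have hsd : Finset.univ \ Finset.image f Finset.univ =
      Finset.univ.filter (fun i => i ∉ Finset.image f Finset.univ) := by
    rw [Finset.sdiff_eq_filter]
  rw [hsd, Finset.sum_filter]
  apply Finset.sum_congr rfl
  intro i _
  have hmem : (∃ a, Fin.castLE hpq (f a) = Fin.castLE hpq i) ↔ i ∈ Finset.image f Finset.univ := by
    constructor
    · rintro ⟨a, ha⟩
      exact Finset.mem_image.2 ⟨a, Finset.mem_univ _,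
        Fin.ext (by simpa using congrArg Fin.val ha)⟩
    · intro h
      obtain ⟨a, -, ha⟩ := Finset.mem_image.1 h
      exact ⟨a, by rw [ha]⟩
  have hw : weightedSympSV n p q hpq σ S i ^ 2 =
      if h : (i : ℕ) < p then
        σ ⟨i, h⟩ ^ 2 * ((∑ r, (S r (Sum.inl (Fin.castLE hpq i))) ^ 2) +
          ∑ r, (S r (Sum.inr (Fin.castLE hpq i))) ^ 2)
      else ∑ r, (S r (Sum.inl (Fin.castLE hpq i))) ^ 2 := by
    unfold weightedSympSV
    split_ifs with h
    · rw [mul_pow, Real.sq_sqrt (by positivity)]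
    · rw [Real.sq_sqrt (by positivity)]
  simp only [Sum.elim_inl, Sum.elim_inr, id_eq]
  by_cases him : i ∈ Finset.image f Finset.univ
  · rw [if_pos (hmem.2 him), if_neg (not_not_intro him)]
    by_cases hip : (i : ℕ) < p
    · rw [dif_pos hip]
      erw [if_pos (hmem.2 him)]
      ring
    · rw [dif_neg hip]
      erw [if_pos (hmem.2 him)]
      ring
  · rw [if_neg (fun hex => him (hmem.1 hex)), if_pos him, hw]
    by_cases hip : (i : ℕ) < p
    · rw [dif_pos hip, dif_pos hip]
      erw [if_neg (fun hex => him (hmem.1 hex))]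
      have hd : dvec n p q σ (Sum.inl (Fin.castLE hpq i)) = σ ⟨i, hip⟩ ^ 2 := by
        simp only [dvec]
        rw [dif_pos (show ((Fin.castLE hpq i : Fin n) : ℕ) < p from hip)]
        rfl
      rw [hd]
      ring
    · rw [dif_neg hip, dif_neg hip]
      erw [if_neg (fun hex => him (hmem.1 hex))]
      have hd : dvec n p q σ (Sum.inl (Fin.castLE hpq i)) = 1 := by
        simp only [dvec]
        rw [dif_neg (show ¬ ((Fin.castLE hpq i : Fin n) : ℕ) < p from hip),
          if_pos (show ((Fin.castLE hpq i : Fin n) : ℕ) < p + q from i.isLt)]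
      rw [hd]
      ring
end
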